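/- arXiv:1305.1439 — 2 statements merged into one kernel-verified Lean document; each statement's English description precedes it below -/
import Mathlib

section
/- In the timed DES setting, the set of controllable sublanguages of a given language F is closed under arbitrary (nonempty, and even empty) unions: if {F_i}_{i∈I} is a family of languages each controllable with respect to G, then ⋃_{i∈I} F_i is controllable with respect to G. -/
/-- Prefix closure of a language. -/
def pr {α : Type*} (L : Set (List α)) : Set (List α) := {s | ∃ t ∈ L, s <+: t}

/-- Eligible events after string `s` in language `L`. -/
def Elig {α : Type*} (L : Set (List α)) (s : List α) : Set α := {σ | s ++ [σ] ∈ L}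

/-- TDES controllability of `F` w.r.t. plant closed language `LG`. -/
def controllable {α : Type*} (Su Sfor : Set α) (tick : α)
    (LG F : Set (List α)) : Prop :=
  ∀ s ∈ pr F,
    (Elig (pr F) s ∩ Sfor = ∅ → Elig LG s ∩ (Su ∪ {tick}) ⊆ Elig (pr F) s) ∧
    (Elig (pr F) s ∩ Sfor ≠ ∅ → Elig LG s ∩ Su ⊆ Elig (pr F) s)

/-!
Prefix closure and eligibility both commute with unions, so at a string `s` of `pr (⋃ i, F i)`
the eligible events of the union are those of the components. If the union offers no forcible
event at `s`, neither does a component `F i` with `s ∈ pr (F i)`, whose controllability then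
supplies every uncontrollable event and `tick`. If the union offers a forcible event, some
component `F j` offers it, and `F j` supplies every uncontrollable event.
-/

section Languages

variable {α ι : Type*}

lemma pr_mono {A B : Set (List α)} (h : A ⊆ B) : pr A ⊆ pr B :=
  fun _ ⟨t, ht, hst⟩ => ⟨t, h ht, hst⟩

lemma pr_iUnion (F : ι → Set (List α)) : pr (⋃ i, F i) = ⋃ i, pr (F i) := by
  ext s
  simp only [pr, Set.mem_iUnion, Set.mem_ofPred_eq]
  exact ⟨fun ⟨t, ⟨i, ht⟩, hst⟩ => ⟨i, t, ht, hst⟩, fun ⟨i, t, ht, hst⟩ => ⟨t, ⟨i, ht⟩, hst⟩⟩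

lemma mem_pr_of_mem_elig_pr {L : Set (List α)} {s : List α} {σ : α} (h : σ ∈ Elig (pr L) s) :
    s ∈ pr L :=
  let ⟨t, ht, hst⟩ := h
  ⟨t, ht, (List.prefix_append s [σ]).trans hst⟩

lemma elig_mono {A B : Set (List α)} (h : A ⊆ B) (s : List α) : Elig A s ⊆ Elig B s :=
  fun _ hσ => h hσ

lemma elig_iUnion (L : ι → Set (List α)) (s : List α) :
    Elig (⋃ i, L i) s = ⋃ i, Elig (L i) s := by
  ext σ
  simp only [Elig, Set.mem_iUnion, Set.mem_ofPred_eq]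

end Languages

theorem controllable_iUnion_general {α : Type*} {ι : Type*} (Su Sfor : Set α) (tick : α)
    (LG : Set (List α)) (F : ι → Set (List α))
    (hctrl : ∀ i, controllable Su Sfor tick LG (F i)) :
    controllable Su Sfor tick LG (⋃ i, F i) := by
  intro s hs
  have elig_subset_union : ∀ j, Elig (pr (F j)) s ⊆ Elig (pr (⋃ i, F i)) s :=
    fun j => elig_mono (pr_mono (Set.subset_iUnion F j)) s
  constructor
  · intro hno_forcible
    obtain ⟨i, hi⟩ := Set.mem_iUnion.mp (pr_iUnion F ▸ hs)
    have hno_forcible_i : Elig (pr (F i)) s ∩ Sfor = ∅ :=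
      Set.subset_eq_empty (Set.inter_subset_inter_left _ (elig_subset_union i)) hno_forcible
    exact ((hctrl i s hi).1 hno_forcible_i).trans (elig_subset_union i)
  · intro hforcible
    obtain ⟨σ, hσ, hσ_for⟩ := Set.nonempty_iff_ne_empty.mpr hforcible
    rw [pr_iUnion, elig_iUnion] at hσ
    obtain ⟨j, hj⟩ := Set.mem_iUnion.mp hσ
    have hforcible_j : Elig (pr (F j)) s ∩ Sfor ≠ ∅ :=
      Set.nonempty_iff_ne_empty.mp ⟨σ, hj, hσ_for⟩
    exact ((hctrl j s (mem_pr_of_mem_elig_pr hj)).2 hforcible_j).trans (elig_subset_union j)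

/-- controllable languages are closed under arbitrary unions. -/
theorem controllable_iUnion {α : Type*} {ι : Type*} (Su Sfor : Set α) (tick : α)
    (LG : Set (List α)) (hLG : LG = pr LG) (F : ι → Set (List α))
    (hsub : ∀ i, F i ⊆ LG)
    (hctrl : ∀ i, controllable Su Sfor tick LG (F i)) :
    controllable Su Sfor tick LG (⋃ i, F i) :=
  controllable_iUnion_general Su Sfor tick LG F hctrl
end

section
/- L_m(SUP) ⊆ P_α⁻¹(L_m(LOC^P_α)) for every forcible event α: every marked string of the monolithic supervisor projects into the marked language of the local preemptor constructed from any preemption cover. -/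
/-- Extended (partial) transition function on strings. -/
def step {X E : Type*} (xi : X → E → Option X) : X → List E → Option X
  | x, [] => some x
  | x, σ :: s => (xi x σ).bind (fun y => step xi y s)

/-- Natural projection onto the subalphabet satisfying `p`. -/
def natProj {E : Type*} (p : E → Prop) [DecidablePred p] (s : List E) : List E :=
  s.filter (fun a => decide (p a))

/-
The relation `x ∈ C i` is a simulation of SUP by the local preemptor up to projection: a move
`x →σ y` of SUP is matched by the induced move of `ζ` out of the cell of `x`, and for `σ ∉ Σ_α`
that move is a selfloop, so erasing `σ` loses nothing. Hence a marked state of SUP lies in the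
cell reached by the projected string, and that cell meets `X_m`.
-/

section Simulation

variable {X I E : Type*} {xi : X → E → Option X} {ζ : I → E → Option I}

theorem step_cons_eq_some {x z : X} {σ : E} {s : List E} :
    step xi x (σ :: s) = some z ↔ ∃ y, xi x σ = some y ∧ step xi y s = some z :=
  Option.bind_eq_some_iff

theorem step_natProj_of_simulation (p : E → Prop) [DecidablePred p] (R : X → I → Prop)
    (hobs : ∀ x i σ y, R x i → xi x σ = some y → p σ → ∃ j, ζ i σ = some j ∧ R y j)
    (hunobs : ∀ x i σ y, R x i → xi x σ = some y → ¬ p σ → R y i) :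
    ∀ (s : List E) {x y : X} {i : I}, R x i → step xi x s = some y →
      ∃ j, step ζ i (natProj p s) = some j ∧ R y j
  | [], x, y, i, hxi, hxy => ⟨i, rfl, Option.some_injective _ hxy ▸ hxi⟩
  | σ :: s, x, y, i, hxi, hxy => by
    obtain ⟨x', hxx', hx'y⟩ := step_cons_eq_some.mp hxy
    by_cases hσ : p σ
    · obtain ⟨i', hii', hx'i'⟩ := hobs x i σ x' hxi hxx' hσ
      obtain ⟨j, hj, hyj⟩ := step_natProj_of_simulation p R hobs hunobs s hx'i' hx'y
      refine ⟨j, ?_, hyj⟩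
      simp only [natProj, List.filter_cons, decide_eq_true hσ, if_true]
      exact step_cons_eq_some.mpr ⟨i', hii', hj⟩
    · have hx'i := hunobs x i σ x' hxi hxx' hσ
      simpa [natProj, hσ] using step_natProj_of_simulation p R hobs hunobs s hx'i hx'y

end Simulation

section Cover

variable {X I E : Type*} {xi : X → E → Option X} {ζ : I → E → Option I} {C : I → Set X}

theorem exists_induced_step_of_mem
    (hζ : ∀ i σ j, ζ i σ = some j → ∀ x ∈ C i, ∀ y, xi x σ = some y → y ∈ C j)
    (hdef : ∀ i σ, (∃ x ∈ C i, (xi x σ).isSome) → (ζ i σ).isSome)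
    {i : I} {σ : E} {x y : X} (hx : x ∈ C i) (hxy : xi x σ = some y) :
    ∃ j, ζ i σ = some j ∧ y ∈ C j := by
  obtain ⟨j, hj⟩ := Option.isSome_iff_exists.mp (hdef i σ ⟨x, hx, by simp [hxy]⟩)
  exact ⟨j, hj, hζ i σ j hj x hx y hxy⟩

theorem mem_of_step_of_selfloop
    (hζ : ∀ i σ j, ζ i σ = some j → ∀ x ∈ C i, ∀ y, xi x σ = some y → y ∈ C j)
    (hdef : ∀ i σ, (∃ x ∈ C i, (xi x σ).isSome) → (ζ i σ).isSome)
    {i : I} {σ : E} (hloop : ∀ j, ζ i σ = some j → j = i)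
    {x y : X} (hx : x ∈ C i) (hxy : xi x σ = some y) : y ∈ C i := by
  obtain ⟨j, hj, hy⟩ := exists_induced_step_of_mem hζ hdef hx hxy
  rwa [← hloop j hj]

end Cover

theorem Lm_SUP_subset_proj_Lm_LOC_general {X E I : Type*} (xi : X → E → Option X)
    (x0 : X) (Xm : Set X) (C : I → Set X)
    (ζ : I → E → Option I)
    -- induced transition function: correspondence with SUP's transitions
    (hζ : ∀ i σ j, ζ i σ = some j →
      (∃ x ∈ C i, ∃ y, xi x σ = some y ∧ y ∈ C j) ∧
      (∀ x' ∈ C i, ∀ y, xi x' σ = some y → y ∈ C j))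
    -- ζ is defined wherever some state in the cell makes the transition
    (hdef : ∀ i σ, (∃ x ∈ C i, (xi x σ).isSome) → (ζ i σ).isSome)
    (Sa : Set E) [DecidablePred (· ∈ Sa)]
    -- events outside Σ_α are only selfloops of ζ'
    (hself : ∀ σ ∉ Sa, ∀ i j, ζ i σ = some j → j = i)
    (i0 : I) (hi0 : x0 ∈ C i0) :
    ∀ s : List E, (∃ x, step xi x0 s = some x ∧ x ∈ Xm) →
      ∃ i, step ζ i0 (natProj (· ∈ Sa) s) = some i ∧ (C i ∩ Xm).Nonempty := by
  have hstep := fun i σ j hj => (hζ i σ j hj).2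
  rintro s ⟨x, hx, hxm⟩
  obtain ⟨i, hi, hxi⟩ := step_natProj_of_simulation (xi := xi) (ζ := ζ) (· ∈ Sa)
    (fun x i ↦ x ∈ C i)
    (fun _ _ _ _ hx hxy _ => exists_induced_step_of_mem hstep hdef hx hxy)
    (fun _ i σ _ hx hxy hσ => mem_of_step_of_selfloop hstep hdef (hself σ hσ i) hx hxy) s hi0 hx
  exact ⟨i, hi, x, hxi, hxm⟩

/-- L_m(SUP) ⊆ P_α⁻¹(L_m(LOC^P_α)): every marked string of the
monolithic supervisor projects into the marked language of the local preemptor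
constructed from a preemption cover.  Here `ζ'` is the induced transition
function on the cells of the cover, events outside Σ_α are selfloops of `ζ'`,
and the local marked cells are those meeting X_m. -/
theorem Lm_SUP_subset_proj_Lm_LOC {X E I : Type*} (xi : X → E → Option X)
    (x0 : X) (Xm : Set X) (C : I → Set X)
    (hne : ∀ i, (C i).Nonempty) (hcov : ∀ x : X, ∃ i, x ∈ C i)
    (ζ : I → E → Option I)
    -- induced transition function: correspondence with SUP's transitions
    (hζ : ∀ i σ j, ζ i σ = some j →
      (∃ x ∈ C i, ∃ y, xi x σ = some y ∧ y ∈ C j) ∧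
      (∀ x' ∈ C i, ∀ y, xi x' σ = some y → y ∈ C j))
    -- ζ is defined wherever some state in the cell makes the transition
    (hdef : ∀ i σ, (∃ x ∈ C i, (xi x σ).isSome) → (ζ i σ).isSome)
    (Sa : Set E) [DecidablePred (· ∈ Sa)] (tick a : E)
    (hta : a ∈ Sa ∧ tick ∈ Sa)
    -- events outside Σ_α are only selfloops of ζ'
    (hself : ∀ σ ∉ Sa, ∀ i j, ζ i σ = some j → j = i)
    (i0 : I) (hi0 : x0 ∈ C i0) :
    ∀ s : List E, (∃ x, step xi x0 s = some x ∧ x ∈ Xm) →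
      ∃ i, step ζ i0 (natProj (· ∈ Sa) s) = some i ∧ (C i ∩ Xm).Nonempty :=
  Lm_SUP_subset_proj_Lm_LOC_general xi x0 Xm C ζ hζ hdef Sa hself i0 hi0
end
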